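/- The polynomial H_B(x) = x^{Q1+Q2} + x^{Q1+1} + x^{Q1} + x^{Q2+1} + 1 has no roots in the unit circle μ_{q+1} = {x ∈ F_{q^2} : x^{q+1} = 1} if and only if i·(j+1) is odd (equivalently, i is odd and j is even) or m is even. -/

import Mathlib

/-!
Write `q = 2^m`. If `x^(q+1) = 1` then `x^q = x⁻¹`, and since `H_B` has coefficients in `𝔽₂`,
the Frobenius `y ↦ y^q` carries a root `x` of `H_B` to the root `x⁻¹`. Adding `H_B(x)` to the
reciprocal polynomial `x^(Q1+Q2) H_B(x⁻¹)` leaves `(x^(Q1-1) + x^(Q2-1))(x² + x + 1)`, and either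
factor vanishing forces `x³ = 1`. As `H_B(1) = 1`, a root on the unit circle is a primitive cube
root of unity `ω`; such an `ω` lies in `μ_{q+1}` iff `3 ∣ 2^m + 1`, i.e. iff `m` is odd, and
reducing `Q1, Q2` modulo `3` shows `H_B(ω) = 0` iff `i` is even or `j` is odd.
-/

lemma Nat.two_pow_mod_three (k : ℕ) : 2 ^ k % 3 = if Even k then 1 else 2 := by
  induction k with
  | zero => rfl
  | succ k ih =>
    rw [pow_succ, Nat.mul_mod, ih]
    by_cases hk : Even k <;> simp [hk, Nat.even_add_one]

lemma Nat.three_dvd_two_pow_add_one_iff {k : ℕ} : 3 ∣ 2 ^ k + 1 ↔ Odd k := by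
  rw [Nat.dvd_iff_mod_eq_zero, Nat.add_mod, Nat.two_pow_mod_three, ← Nat.not_even_iff_odd]
  split_ifs <;> simp [*]

section

variable {R : Type*}

lemma pow_three_eq_one_of_sq_add_add_one [CommRing R] {x : R} (hx : x ^ 2 + x + 1 = 0) :
    x ^ 3 = 1 := by
  linear_combination (x - 1) * hx

lemma pow_three_eq_one_iff [CommRing R] [IsDomain R] {x : R} :
    x ^ 3 = 1 ↔ x = 1 ∨ x ^ 2 + x + 1 = 0 := by
  refine ⟨fun h ↦ ?_, ?_⟩
  · have : (x - 1) * (x ^ 2 + x + 1) = 0 := by linear_combination h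
    rcases mul_eq_zero.1 this with h1 | h1
    · exact .inl (sub_eq_zero.1 h1)
    · exact .inr h1
  · rintro (rfl | hx)
    · exact one_pow 3
    · exact pow_three_eq_one_of_sq_add_add_one hx

lemma pow_two_pow_of_pow_three_eq_one {M : Type*} [Monoid M] {x : M} (hx : x ^ 3 = 1) (k : ℕ) :
    x ^ 2 ^ k = if Even k then x else x ^ 2 := by
  rw [pow_eq_pow_mod _ hx, Nat.two_pow_mod_three]
  split_ifs <;> simp

lemma three_dvd_of_sq_add_add_one_of_pow_eq_one [CommRing R] [Nontrivial R] [CharP R 2] {ω : R}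
    (hω : ω ^ 2 + ω + 1 = 0) {n : ℕ} (hn : ω ^ n = 1) : 3 ∣ n := by
  have : Fact (Nat.Prime 3) := ⟨Nat.prime_three⟩
  have hω1 : ω ≠ 1 := by
    rintro rfl
    exact one_ne_zero (by linear_combination hω - CharTwo.two_eq_zero (R := R))
  rw [← orderOf_eq_prime (pow_three_eq_one_of_sq_add_add_one hω) hω1]
  exact orderOf_dvd_of_pow_eq_one hn

lemma FiniteField.exists_sq_add_add_one_eq_zero {F : Type*} [Field F] [Fintype F]
    (h : 3 ∣ Fintype.card F - 1) : ∃ ω : F, ω ^ 2 + ω + 1 = 0 := by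
  classical
  have : Fact (Nat.Prime 3) := ⟨Nat.prime_three⟩
  obtain ⟨u, hu⟩ := exists_prime_orderOf_dvd_card (G := Fˣ) 3 (by rwa [Fintype.card_units])
  refine ⟨u, (pow_three_eq_one_iff.1 ?_).resolve_left fun h1 ↦ ?_⟩
  · rw [← Units.val_pow_eq_pow_val, ← hu, pow_orderOf_eq_one, Units.val_one]
  · rw [Units.val_eq_one.1 h1, orderOf_one] at hu
    exact absurd hu (by norm_num)

def hB [Semiring R] (Q₁ Q₂ : ℕ) (x : R) : R :=
  x ^ (Q₁ + Q₂) + x ^ (Q₁ + 1) + x ^ Q₁ + x ^ (Q₂ + 1) + 1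

lemma map_hB {S : Type*} [Semiring R] [Semiring S] (f : R →+* S) (Q₁ Q₂ : ℕ) (x : R) :
    f (hB Q₁ Q₂ x) = hB Q₁ Q₂ (f x) := by
  simp only [hB, map_add, map_pow, map_one]

lemma hB_one [Ring R] [CharP R 2] (Q₁ Q₂ : ℕ) : hB Q₁ Q₂ (1 : R) = 1 := by
  simp only [hB, one_pow, CharTwo.add_self_eq_zero, zero_add]

/-- With `y = x⁻¹`: `H_B(x)` plus its reciprocal `x^(Q₁+Q₂) H_B(x⁻¹)`, times `x` to clear the
negative exponents. -/
lemma mul_hB_add_pow_mul_hB [CommRing R] [CharP R 2] {x y : R} (hxy : x * y = 1) (Q₁ Q₂ : ℕ) :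
    x * (hB Q₁ Q₂ x + x ^ (Q₁ + Q₂) * hB Q₁ Q₂ y) = (x ^ Q₁ + x ^ Q₂) * (x ^ 2 + x + 1) := by
  have h : ∀ n, (x * y) ^ n = 1 := fun n ↦ by rw [hxy, one_pow]
  unfold hB
  linear_combination x * h (Q₁ + Q₂) + x ^ Q₂ * h (Q₁ + 1) + x ^ (Q₂ + 1) * h Q₁
    + x ^ Q₁ * h (Q₂ + 1) + (x ^ (Q₁ + Q₂ + 1) + x) * CharTwo.two_eq_zero (R := R)

lemma pow_three_eq_one_of_hB_eq_zero [CommRing R] [IsDomain R] [CharP R 2] {x : R} {m i : ℕ}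
    (Q₂ : ℕ) (hx : x ^ (2 ^ m + 1) = 1) (hroot : hB (2 ^ i) Q₂ x = 0) : x ^ 3 = 1 := by
  have hxy : x * x ^ 2 ^ m = 1 := by rw [← pow_succ', hx]
  have hconj : hB (2 ^ i) Q₂ (x ^ 2 ^ m) = 0 := by
    rw [← iterateFrobenius_def (p := 2), ← map_hB, hroot, map_zero]
  have hfactor := mul_hB_add_pow_mul_hB hxy (2 ^ i) Q₂
  rw [hroot, hconj, mul_zero, add_zero, mul_zero, eq_comm, mul_eq_zero] at hfactor
  rcases hfactor with heq | hx3
  · rw [CharTwo.add_eq_zero] at heq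
    have hsq : (x ^ 2 ^ i) ^ 2 + x ^ 2 ^ i + 1 = 0 := by
      rw [← hroot, hB]
      linear_combination (x ^ 2 ^ i - x) * heq - x * x ^ Q₂ * CharTwo.two_eq_zero (R := R)
    -- `(x³)^(2^i) = 1` and Frobenius is injective
    apply iterateFrobenius_inj R 2 i
    rw [iterateFrobenius_def, iterateFrobenius_def, one_pow, ← pow_mul, mul_comm, pow_mul]
    exact pow_three_eq_one_of_sq_add_add_one hsq
  · exact pow_three_eq_one_of_sq_add_add_one hx3

lemma hB_two_pow_eq_zero_iff [CommRing R] [Nontrivial R] [CharP R 2] {ω : R}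
    (hω : ω ^ 2 + ω + 1 = 0) (i j : ℕ) :
    hB (2 ^ i) (2 ^ j) ω = 0 ↔ Even i ∨ Odd j := by
  have h3 := pow_three_eq_one_of_sq_add_add_one hω
  have h2 : (2 : R) = 0 := CharTwo.two_eq_zero
  simp only [hB, pow_add, pow_one, pow_two_pow_of_pow_three_eq_one h3, ← Nat.not_even_iff_odd]
  by_cases hi : Even i <;> by_cases hj : Even j <;> simp only [hi, hj, if_true, if_false,
    true_or, false_or, not_true, not_false_iff, iff_true, iff_false]
  · linear_combination hω + ω ^ 2 * h2
  · linear_combination hω + ω ^ 3 * h2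
  · intro h
    exact one_ne_zero (by linear_combination h - (ω ^ 3 + ω ^ 2) * h2)
  · linear_combination hω + ω * h3 + ω ^ 3 * h2

end

lemma exists_pow_eq_one_hB_eq_zero_iff {F : Type*} [Field F] [Fintype F] {m : ℕ}
    (hF : Fintype.card F = (2 ^ m) ^ 2) (i j : ℕ) :
    (∃ x : F, x ^ (2 ^ m + 1) = 1 ∧ hB (2 ^ i) (2 ^ j) x = 0) ↔ Odd m ∧ (Even i ∨ Odd j) := by
  have : Fact (Nat.Prime 2) := ⟨Nat.prime_two⟩
  have : CharP F 2 := charP_of_card_eq_prime_pow (hF.trans (pow_mul 2 m 2).symm)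
  constructor
  · rintro ⟨x, hx, hroot⟩
    rcases pow_three_eq_one_iff.1 (pow_three_eq_one_of_hB_eq_zero _ hx hroot) with rfl | hω
    · exact absurd hroot (by rw [hB_one]; exact one_ne_zero)
    · exact ⟨Nat.three_dvd_two_pow_add_one_iff.1 (three_dvd_of_sq_add_add_one_of_pow_eq_one hω hx),
        (hB_two_pow_eq_zero_iff hω i j).1 hroot⟩
  · rintro ⟨hm, hij⟩
    obtain ⟨k, hk⟩ := Nat.three_dvd_two_pow_add_one_iff.2 hm
    obtain ⟨ω, hω⟩ := FiniteField.exists_sq_add_add_one_eq_zero (F := F) <| by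
      rw [hF, ← one_pow 2, Nat.sq_sub_sq, hk, mul_assoc]
      exact dvd_mul_right 3 _
    refine ⟨ω, ?_, (hB_two_pow_eq_zero_iff hω i j).2 hij⟩
    rw [hk, pow_mul, pow_three_eq_one_of_sq_add_add_one hω, one_pow]

theorem HB_no_roots_unit_circle_iff_general
    (m i j : ℕ)
    (q Q1 Q2 : ℕ) (hq : q = 2 ^ m) (hQ1 : Q1 = 2 ^ i) (hQ2 : Q2 = 2 ^ j)
    (F : Type*) [Field F] [Fintype F] (hF : Fintype.card F = q ^ 2) :
    (∀ x : F, x ^ (q + 1) = 1 →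
        x ^ (Q1 + Q2) + x ^ (Q1 + 1) + x ^ Q1 + x ^ (Q2 + 1) + 1 ≠ 0) ↔
      (Odd (i * (j + 1)) ∨ Even m) := by
  subst hq hQ1 hQ2
  rw [← not_iff_not]
  simpa [hB, Nat.even_mul, Nat.even_add_one, and_comm] using
    exists_pow_eq_one_hB_eq_zero_iff hF i j

/-- `H_B(x) = x^{Q1+Q2} + x^{Q1+1} + x^{Q1} + x^{Q2+1} + 1` has no roots in the unit
circle `μ_{q+1}` of `F_{q^2}` iff `i·(j+1)` is odd or `m` is even. -/
theorem HB_no_roots_unit_circle_iff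
    (m i j : ℕ) (hm : 0 < m) (hi : 0 < i) (hj : 0 < j)
    (q Q1 Q2 : ℕ) (hq : q = 2 ^ m) (hQ1 : Q1 = 2 ^ i) (hQ2 : Q2 = 2 ^ j)
    (F : Type*) [Field F] [Fintype F] (hF : Fintype.card F = q ^ 2) :
    (∀ x : F, x ^ (q + 1) = 1 →
        x ^ (Q1 + Q2) + x ^ (Q1 + 1) + x ^ Q1 + x ^ (Q2 + 1) + 1 ≠ 0) ↔
      (Odd (i * (j + 1)) ∨ Even m) :=
  HB_no_roots_unit_circle_iff_general m i j q Q1 Q2 hq hQ1 hQ2 F hF
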